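/- arXiv:2207.03118 — 3 statements merged into one kernel-verified Lean document; each statement's English description precedes it below -/
import Mathlib

section
/- Let g: T_0 → T be a proper continuous surjection of locally compact Hausdorff spaces which is at most N-to-one, with T_0 second countable and totally disconnected, F a sheaf on T, and F^n = (g_n)_*(g_n^* F). Define the subsheaf F^{n,a} ⊆ F^n by Γ(U, F^{n,a}) = {x ∈ Γ(U, F^n) : supp x ⊆ T_n^f and s·x = (−1)^{|s|} x for all s ∈ S_{n+1}}, where the support is taken in T_n via the identification of sections of F^n over U with sections of g_n^*F over g_n^{-1}(U). Then the sheaf F^{n,a} is c-soft. -/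
structure EtaleSheaf (X : Type) [TopologicalSpace X] where
  E : Type
  tE : TopologicalSpace E
  proj : E → X
  etale : @IsLocalHomeomorph E X tE _ proj

attribute [instance] EtaleSheaf.tE

structure AbEtaleSheaf (X : Type) [TopologicalSpace X] extends EtaleSheaf X where
  add : E → E → E
  zero : X → E
  neg : E → E
  proj_add : ∀ e e', proj e = proj e' → proj (add e e') = proj e
  proj_zero : ∀ x, proj (zero x) = x
  proj_neg : ∀ e, proj (neg e) = proj e
  add_assoc : ∀ e e' e'', proj e = proj e' → proj e' = proj e'' →
    add (add e e') e'' = add e (add e' e'')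
  add_comm : ∀ e e', proj e = proj e' → add e e' = add e' e
  add_zero : ∀ e, add e (zero (proj e)) = e
  add_neg : ∀ e, add e (neg e) = zero (proj e)
  continuous_zero : Continuous zero
  continuous_neg : Continuous neg
  continuous_add : ContinuousOn (fun p : E × E => add p.1 p.2) {p | proj p.1 = proj p.2}

namespace AbEtaleSheaf

variable {X : Type} [TopologicalSpace X]

def Sect (F : AbEtaleSheaf X) (U : Set X) : Type :=
  {s : U → F.E // Continuous s ∧ ∀ x : U, F.proj (s x) = x}

def suppSect (F : AbEtaleSheaf X) {U : Set X} (s : F.Sect U) : Set X :=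
  Subtype.val '' {x : U | s.1 x ≠ F.zero x}

def Stalk (F : AbEtaleSheaf X) (x : X) : Type := {e : F.E // F.proj e = x}

lemma zero_add' (F : AbEtaleSheaf X) (e : F.E) : F.add (F.zero (F.proj e)) e = e := by
  rw [F.add_comm _ _ (by rw [F.proj_zero])]
  exact F.add_zero e

lemma neg_add' (F : AbEtaleSheaf X) (e : F.E) : F.add (F.neg e) e = F.zero (F.proj e) := by
  rw [F.add_comm _ _ (by rw [F.proj_neg])]
  exact F.add_neg e

noncomputable instance stalkZero (F : AbEtaleSheaf X) (x : X) : Zero (F.Stalk x) :=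
  ⟨⟨F.zero x, F.proj_zero x⟩⟩

noncomputable instance stalkAdd (F : AbEtaleSheaf X) (x : X) : Add (F.Stalk x) :=
  ⟨fun e e' => ⟨F.add e.1 e'.1, by rw [F.proj_add e.1 e'.1 (by rw [e.2, e'.2]), e.2]⟩⟩

noncomputable instance stalkNeg (F : AbEtaleSheaf X) (x : X) : Neg (F.Stalk x) :=
  ⟨fun e => ⟨F.neg e.1, by rw [F.proj_neg, e.2]⟩⟩

noncomputable instance (F : AbEtaleSheaf X) (x : X) : AddCommGroup (F.Stalk x) where
  add := (· + ·)
  zero := 0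
  neg := Neg.neg
  add_assoc e e' e'' := Subtype.ext
    (F.add_assoc _ _ _ (by rw [e.2, e'.2]) (by rw [e'.2, e''.2]))
  zero_add := fun ⟨e, he⟩ => Subtype.ext (by subst he; exact F.zero_add' e)
  add_zero := fun ⟨e, he⟩ => Subtype.ext (by subst he; exact F.add_zero e)
  neg_add_cancel := fun ⟨e, he⟩ => Subtype.ext (by subst he; exact F.neg_add' e)
  add_comm e e' := Subtype.ext (F.add_comm e.1 e'.1 (by rw [e.2, e'.2]))
  nsmul := nsmulRec
  zsmul := zsmulRec

end AbEtaleSheaf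

/-- The `(n+1)`-fold fiber power `T_n` of a map `g : T0 → T`. -/
def FibPow {T0 T : Type} (g : T0 → T) (n : ℕ) : Type :=
  {t : Fin (n + 1) → T0 // ∀ i j, g (t i) = g (t j)}

instance {T0 T : Type} [TopologicalSpace T0] (g : T0 → T) (n : ℕ) :
    TopologicalSpace (FibPow g n) :=
  instTopologicalSpaceSubtype

/-- The induced map `g_n : T_n → T`. -/
def FibPow.proj {T0 T : Type} (g : T0 → T) (n : ℕ) (t : FibPow g n) : T := g (t.1 0)

/-- The permutation action of `S_{n+1}` on `T_n`. -/
def FibPow.permTuple {T0 T : Type} (g : T0 → T) (n : ℕ) (σ : Equiv.Perm (Fin (n + 1)))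
    (t : FibPow g n) : FibPow g n :=
  ⟨fun i => t.1 (σ i), fun i j => t.2 (σ i) (σ j)⟩

lemma FibPow.proj_permTuple {T0 T : Type} (g : T0 → T) (n : ℕ)
    (σ : Equiv.Perm (Fin (n + 1))) (t : FibPow g n) :
    FibPow.proj g n (FibPow.permTuple g n σ t) = FibPow.proj g n t :=
  t.2 (σ 0) 0

/-- The free part `T_n^f ⊆ T_n`: tuples with pairwise distinct coordinates. -/
def FibPow.freePart {T0 T : Type} (g : T0 → T) (n : ℕ) : Set (FibPow g n) :=
  {t | Function.Injective t.1}

variable {T0 T : Type} [TopologicalSpace T0] [TopologicalSpace T]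

/-- A section of the **alternating subsheaf** `F^{n,a} ⊆ F^n = (g_n)_*(g_n^* F)` over
`U ⊆ T`: sections of `F^n` over `U` are identified with sections of the pullback
`g_n^* F` over `g_n⁻¹(U)`, i.e. continuous maps `s : g_n⁻¹(U) → F.E` with
`F.proj ∘ s = g_n`; the alternating condition requires `σ · s = (−1)^{|σ|} s` for all
`σ ∈ S_{n+1}` and that the support of `s` is contained in the free part `T_n^f`. -/
def AltSect (F : AbEtaleSheaf T) (g : T0 → T) (n : ℕ) (U : Set T) : Type :=
  {s : ↥(FibPow.proj g n ⁻¹' U) → F.E //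
    Continuous s ∧
    (∀ z : ↥(FibPow.proj g n ⁻¹' U), F.proj (s z) = FibPow.proj g n z.1) ∧
    (∀ (σ : Equiv.Perm (Fin (n + 1))) (z : ↥(FibPow.proj g n ⁻¹' U)),
      s ⟨FibPow.permTuple g n σ z.1, by
          show FibPow.proj g n (FibPow.permTuple g n σ z.1) ∈ U
          rw [FibPow.proj_permTuple]
          exact z.2⟩ =
        if Equiv.Perm.sign σ = 1 then s z else F.neg (s z)) ∧
    (∀ z : ↥(FibPow.proj g n ⁻¹' U), z.1 ∉ FibPow.freePart g n →
      s z = F.zero (FibPow.proj g n z.1))}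

/-! Sections over a neighbourhood of `K` are cut off along a clopen, `S_{n+1}`-invariant
neighbourhood `W` of `g_n⁻¹(K)` inside `g_n⁻¹(U)` and extended by zero. Such a `W` exists because
`T_n` is a closed subspace of the locally compact, totally disconnected space `T₀^{n+1}` and
`g_n⁻¹(K)` is compact; intersecting the `S_{n+1}`-translates makes it invariant. Since `g_n`
is closed, `V = U \ g_n(T_n \ W)` is an open neighbourhood of `K` over which the extension
agrees with the given section. -/

lemma exists_isClopen_between_of_isCompact {X : Type*} [TopologicalSpace X]
    [LocallyCompactSpace X] [T2Space X] [TotallyDisconnectedSpace X]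
    {C O : Set X} (hC : IsCompact C) (hO : IsOpen O) (hCO : C ⊆ O) :
    ∃ W : Set X, IsClopen W ∧ C ⊆ W ∧ W ⊆ O := by
  obtain ⟨L, -, hCL, hLO⟩ := exists_compact_between hC hO hCO
  choose V hV hxV hVL using fun x (hx : x ∈ C) =>
    loc_compact_Haus_tot_disc_of_zero_dim.exists_subset_of_mem_open (hCL hx) isOpen_interior
  obtain ⟨t, hCt⟩ := hC.elim_nhds_subcover' V fun x hx => (hV x hx).isOpen.mem_nhds (hxV x hx)
  exact ⟨⋃ x ∈ t, V x x.2, isClopen_biUnion_finset fun x _ => hV x x.2, hCt,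
    Set.iUnion₂_subset fun x _ => (hVL x x.2).trans (interior_subset.trans hLO)⟩

lemma IsClopen.continuous_dite {X Y : Type*} [TopologicalSpace X] [TopologicalSpace Y]
    {W : Set X} [∀ x, Decidable (x ∈ W)] (hW : IsClopen W) {f : W → Y} (hf : Continuous f)
    {g : X → Y} (hg : Continuous g) :
    Continuous fun x => if h : x ∈ W then f ⟨x, h⟩ else g x := by
  rw [← continuousOn_univ, ← Set.union_compl_self W]
  refine ContinuousOn.union_of_isClosed ?_ ?_ hW.isClosed hW.isOpen.isClosed_compl
  · refine continuousOn_iff_continuous_domRestrict.2 ?_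
    convert hf using 1
    funext x
    exact dif_pos x.2
  · exact hg.continuousOn.congr fun x hx => dif_neg hx

lemma AbEtaleSheaf.neg_zero' {X : Type} [TopologicalSpace X] (F : AbEtaleSheaf X) (x : X) :
    F.neg (F.zero x) = F.zero x :=
  congrArg Subtype.val (neg_zero : -(0 : F.Stalk x) = 0)

namespace FibPow

variable {X₀ X : Type} {g : X₀ → X} {n : ℕ}

lemma permTuple_permTuple (σ τ : Equiv.Perm (Fin (n + 1))) (z : FibPow g n) :
    permTuple g n τ (permTuple g n σ z) = permTuple g n (σ * τ) z :=
  rfl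

lemma permTuple_one (z : FibPow g n) : permTuple g n 1 z = z :=
  rfl

def symmetrize (W : Set (FibPow g n)) : Set (FibPow g n) :=
  ⋂ σ : Equiv.Perm (Fin (n + 1)), permTuple g n σ ⁻¹' W

lemma symmetrize_subset {W : Set (FibPow g n)} : symmetrize W ⊆ W :=
  fun _ hz => Set.mem_iInter.1 hz 1

lemma permTuple_mem_symmetrize_iff {W : Set (FibPow g n)} (σ : Equiv.Perm (Fin (n + 1)))
    (z : FibPow g n) : permTuple g n σ z ∈ symmetrize W ↔ z ∈ symmetrize W := by
  have hmem : ∀ (σ : Equiv.Perm (Fin (n + 1))) z, z ∈ symmetrize W →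
      permTuple g n σ z ∈ symmetrize W :=
    fun σ _ hz => Set.mem_iInter.2 fun τ => Set.mem_iInter.1 hz (σ * τ)
  refine ⟨fun hσz => ?_, hmem σ z⟩
  have hz := hmem σ⁻¹ _ hσz
  rwa [permTuple_permTuple, mul_inv_cancel, permTuple_one] at hz

lemma preimage_proj_subset_symmetrize {W : Set (FibPow g n)} {K : Set X}
    (hKW : proj g n ⁻¹' K ⊆ W) : proj g n ⁻¹' K ⊆ symmetrize W := fun z hz =>
  Set.mem_iInter.2 fun σ => hKW (by rwa [Set.mem_preimage, proj_permTuple])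

variable [TopologicalSpace X₀]

lemma continuous_permTuple (σ : Equiv.Perm (Fin (n + 1))) : Continuous (permTuple g n σ) := by
  apply Continuous.subtype_mk
  exact continuous_pi fun i => (continuous_apply (σ i)).comp continuous_subtype_val

lemma isClopen_symmetrize {W : Set (FibPow g n)} (hW : IsClopen W) : IsClopen (symmetrize W) :=
  isClopen_iInter_of_finite fun σ => hW.preimage (continuous_permTuple σ)

variable [TopologicalSpace X]

lemma continuous_proj (hg : Continuous g) : Continuous (proj g n) :=
  hg.comp ((continuous_apply 0).comp continuous_subtype_val)

lemma isClosed_setOf [T2Space X] (hg : Continuous g) :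
    IsClosed {t : Fin (n + 1) → X₀ | ∀ i j, g (t i) = g (t j)} := by
  simp only [Set.ofPred_forall]
  exact isClosed_iInter fun i => isClosed_iInter fun j =>
    isClosed_eq (hg.comp (continuous_apply i)) (hg.comp (continuous_apply j))

lemma isClosedEmbedding_val [T2Space X] (hg : Continuous g) :
    Topology.IsClosedEmbedding (Subtype.val : FibPow g n → (Fin (n + 1) → X₀)) :=
  (isClosed_setOf hg).isClosedEmbedding_subtypeVal

lemma isCompact_preimage_proj [T2Space X] (hg : IsProperMap g) {K : Set X} (hK : IsCompact K) :
    IsCompact (proj g n ⁻¹' K) := by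
  have hbox : IsCompact (Subtype.val ⁻¹' Set.univ.pi fun _ => g ⁻¹' K : Set (FibPow g n)) :=
    (isClosedEmbedding_val hg.continuous).isCompact_preimage
      (isCompact_univ_pi fun _ => hg.isCompact_preimage hK)
  refine hbox.of_isClosed_subset (hK.isClosed.preimage (continuous_proj hg.continuous)) ?_
  rintro z hz i -
  show g (z.1 i) ∈ K
  rwa [z.2 i 0]

/-- `g_n(A)` is the set of `x` whose constant tuple lies in the image of `A` under `g^{n+1}`,
which is closed because `g^{n+1}` is proper. -/
lemma isClosedMap_proj [T2Space X] (hg : IsProperMap g) : IsClosedMap (proj g n) := by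
  intro A hA
  have hgpi : IsClosedMap fun (t : Fin (n + 1) → X₀) i => g (t i) :=
    (IsProperMap.pi_map fun _ => hg).isClosedMap
  have himage : proj g n '' A =
      (fun x _ => x) ⁻¹' ((fun (t : Fin (n + 1) → X₀) i => g (t i)) '' (Subtype.val '' A)) := by
    ext x
    constructor
    · rintro ⟨z, hz, rfl⟩
      exact ⟨z.1, ⟨z, hz, rfl⟩, funext fun i => z.2 i 0⟩
    · rintro ⟨-, ⟨z, hz, rfl⟩, hzx⟩
      exact ⟨z, hz, congrFun hzx 0⟩
  rw [himage]
  exact (hgpi _ ((isClosedEmbedding_val hg.continuous).isClosedMap _ hA)).preimage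
    (continuous_pi fun _ => continuous_id)

lemma exists_isClopen_between [T2Space X₀] [LocallyCompactSpace X₀]
    [TotallyDisconnectedSpace X₀] [T2Space X] (hg : Continuous g) {C O : Set (FibPow g n)}
    (hC : IsCompact C) (hO : IsOpen O) (hCO : C ⊆ O) :
    ∃ W : Set (FibPow g n), IsClopen W ∧ C ⊆ W ∧ W ⊆ O := by
  have : LocallyCompactSpace (FibPow g n) := (isClosedEmbedding_val hg).locallyCompactSpace
  have : TotallyDisconnectedSpace (FibPow g n) := Subtype.totallyDisconnectedSpace
  have : T2Space (FibPow g n) := instT2SpaceSubtype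
  exact exists_isClopen_between_of_isCompact hC hO hCO

end FibPow

namespace AltSect

variable {F : AbEtaleSheaf T} {g : T0 → T} {n : ℕ} {U : Set T} {W : Set (FibPow g n)}

open Classical in
noncomputable def extendByZero (hg : Continuous g) (s : AltSect F g n U) (hW : IsClopen W)
    (hWU : W ⊆ FibPow.proj g n ⁻¹' U)
    (hWinv : ∀ σ z, FibPow.permTuple g n σ z ∈ W ↔ z ∈ W) : AltSect F g n Set.univ where
  val z := if h : z.1 ∈ W then s.1 ⟨z.1, hWU h⟩ else F.zero (FibPow.proj g n z.1)
  property := by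
    obtain ⟨hs_cont, hs_proj, hs_alt, hs_supp⟩ := s.2
    refine ⟨(hW.continuous_dite (hs_cont.comp (continuous_inclusion hWU))
      (F.continuous_zero.comp (FibPow.continuous_proj hg))).comp continuous_subtype_val,
      fun z => ?_, fun σ z => ?_, fun z hz => ?_⟩ <;> dsimp only
    · split_ifs with h
      exacts [hs_proj _, F.proj_zero _]
    · by_cases h : z.1 ∈ W
      · simp only [dif_pos h, dif_pos ((hWinv σ z.1).2 h)]
        exact hs_alt σ ⟨z.1, hWU h⟩
      · simp only [dif_neg h, dif_neg (mt (hWinv σ z.1).1 h), FibPow.proj_permTuple,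
          F.neg_zero', ite_self]
    · split_ifs with h
      exacts [hs_supp _ hz, rfl]

lemma extendByZero_apply_of_mem (hg : Continuous g) (s : AltSect F g n U) (hW : IsClopen W)
    (hWU : W ⊆ FibPow.proj g n ⁻¹' U) (hWinv : ∀ σ z, FibPow.permTuple g n σ z ∈ W ↔ z ∈ W)
    {z : FibPow g n} (hz : z ∈ W) :
    (extendByZero hg s hW hWU hWinv).1 ⟨z, Set.mem_univ _⟩ = s.1 ⟨z, hWU hz⟩ :=
  dif_pos hz

end AltSect

theorem alternating_subsheaf_is_csoft_general
    [T2Space T0] [LocallyCompactSpace T0]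
    [TotallyDisconnectedSpace T0] [T2Space T]
    (g : T0 → T) (hp : IsProperMap g)
    (F : AbEtaleSheaf T) (n : ℕ) :
    ∀ K : Set T, IsCompact K → ∀ U : Set T, IsOpen U → K ⊆ U →
      ∀ s : AltSect F g n U,
        ∃ V : Set T, IsOpen V ∧ K ⊆ V ∧ ∃ hVU : V ⊆ U,
          ∃ t : AltSect F g n Set.univ,
            ∀ (z : FibPow g n) (hz : FibPow.proj g n z ∈ V),
              t.1 ⟨z, Set.mem_univ _⟩ = s.1 ⟨z, hVU hz⟩ := by
  intro K hK U hU hKU s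
  obtain ⟨W, hW, hKW, hWU⟩ := FibPow.exists_isClopen_between hp.continuous
    (FibPow.isCompact_preimage_proj (n := n) hp hK)
    (hU.preimage (FibPow.continuous_proj hp.continuous)) (Set.preimage_mono hKU)
  set W' := FibPow.symmetrize W
  have hW' : IsClopen W' := FibPow.isClopen_symmetrize hW
  have hKW' : FibPow.proj g n ⁻¹' K ⊆ W' := FibPow.preimage_proj_subset_symmetrize hKW
  set V := U \ FibPow.proj g n '' W'ᶜ
  have hV : IsOpen V := hU.sdiff (FibPow.isClosedMap_proj hp _ hW'.isOpen.isClosed_compl)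
  have hKV : K ⊆ V := fun x hx =>
    ⟨hKU hx, fun ⟨z, hzW', hzx⟩ => hzW' (hKW' (by rwa [Set.mem_preimage, hzx]))⟩
  have hVW' : ∀ z, FibPow.proj g n z ∈ V → z ∈ W' := fun z hz =>
    by_contra fun hzW' => hz.2 ⟨z, hzW', rfl⟩
  exact ⟨V, hV, hKV, Set.sdiff_subset,
    AltSect.extendByZero hp.continuous s hW' (FibPow.symmetrize_subset.trans hWU)
      FibPow.permTuple_mem_symmetrize_iff,
    fun z hz => AltSect.extendByZero_apply_of_mem _ _ _ _ _ (hVW' z hz)⟩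

/-- Let `g : T₀ → T` be a proper continuous surjection of locally
compact Hausdorff spaces which is at most `N`-to-one, with `T₀` second countable and
totally disconnected, `F` a sheaf (of abelian groups) on `T`, and
`F^n = (g_n)_*(g_n^* F)`.  Then the alternating subsheaf `F^{n,a} ⊆ F^n` (sections
supported on the free part `T_n^f` transforming by the sign character of `S_{n+1}`) is
c-soft: every section defined near a compact set extends globally (local extension
criterion). -/
theorem alternating_subsheaf_is_csoft
    [T2Space T0] [LocallyCompactSpace T0] [SecondCountableTopology T0]
    [TotallyDisconnectedSpace T0] [T2Space T] [LocallyCompactSpace T]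
    (g : T0 → T) (hc : Continuous g) (hp : IsProperMap g)
    (hsurj : Function.Surjective g) (N : ℕ)
    (hN : ∀ x : T, (g ⁻¹' {x}).Finite ∧ (g ⁻¹' {x}).ncard ≤ N)
    (F : AbEtaleSheaf T) (n : ℕ) :
    ∀ K : Set T, IsCompact K → ∀ U : Set T, IsOpen U → K ⊆ U →
      ∀ s : AltSect F g n U,
        ∃ V : Set T, IsOpen V ∧ K ⊆ V ∧ ∃ hVU : V ⊆ U,
          ∃ t : AltSect F g n Set.univ,
            ∀ (z : FibPow g n) (hz : FibPow.proj g n z ∈ V),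
              t.1 ⟨z, Set.mem_univ _⟩ = s.1 ⟨z, hVU hz⟩ :=
  alternating_subsheaf_is_csoft_general g hp F n
end

section
/- Let g: T_0 → T be a proper continuous surjection of locally compact Hausdorff spaces which is at most N-to-one, F a sheaf of abelian groups on T, and F^{n,a} the alternating subsheaves of F^n = (g_n)_*(g_n^* F) supported on the free part. Then (F^{n,a})_n is a subcomplex of the cosimplicial complex (F^n)_n which vanishes in degrees above N, and the augmented complex 0 → F → F^{0,a} → F^{1,a} → ⋯ → F^{N,a} → 0 is exact; equivalently, at each stalk t ∈ T with Z_t = g^{-1}(t) finite of cardinality at most N+1, the augmented complex 0 → F_t → F^{0,a}_t → ⋯ → F^{N,a}_t → 0 is exact, where F^{n,a}_t = {f ∈ C(Z_t^{n+1}, F_t) : supp f ⊆ Z_t^{n+1} ∖ D_{n+1}, s·f = (−1)^{|s|} f for all s ∈ S_{n+1}} and D_{n+1} is the union of non-free S_{n+1}-orbits. -/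
/-- The coboundary map `C(Z^{n+1}, M) → C(Z^{n+2}, M)` of the cosimplicial abelian
group of functions on tuples: `(δ φ)(f) = ∑_i (−1)^i φ(f ∘ δ_i)`. -/
def cosimplicialCoboundary (Z M : Type) [AddCommGroup M] (n : ℕ) :
    ((Fin (n + 1) → Z) → M) →+ ((Fin (n + 2) → Z) → M) :=
  AddMonoidHom.mk'
    (fun φ f => ∑ i : Fin (n + 2), ((-1 : ℤ) ^ (i : ℕ)) • φ (f ∘ i.succAbove))
    (by
      intro φ ψ
      funext f
      simp [smul_add, Finset.sum_add_distrib])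

/-- The augmentation `M → C(Z, M)` by constant functions. -/
def cosimplicialAugmentation (Z M : Type) [AddCommGroup M] :
    M →+ ((Fin 1 → Z) → M) :=
  AddMonoidHom.mk' (fun c _ => c) (by intro a b; rfl)

/-- The alternating subgroup `F^{n,a}_t ⊆ C(Z^{n+1}, M)`: functions supported on the
injective (free-orbit) tuples which transform by the sign character of `S_{n+1}`. -/
def alternatingSubgroup (Z M : Type) [AddCommGroup M] (n : ℕ) :
    AddSubgroup ((Fin (n + 1) → Z) → M) where
  carrier := {φ | (∀ f : Fin (n + 1) → Z, ¬ Function.Injective f → φ f = 0) ∧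
    ∀ (σ : Equiv.Perm (Fin (n + 1))) (f : Fin (n + 1) → Z),
      φ (f ∘ σ) = ((Equiv.Perm.sign σ : ℤˣ) : ℤ) • φ f}
  add_mem' := by
    rintro φ ψ ⟨h1, h2⟩ ⟨h3, h4⟩
    refine ⟨fun f hf => ?_, fun σ f => ?_⟩
    · simp [h1 f hf, h3 f hf]
    · simp [h2 σ f, h4 σ f, smul_add]
  zero_mem' := by
    refine ⟨fun f _ => rfl, fun σ f => ?_⟩
    simp
  neg_mem' := by
    rintro φ ⟨h1, h2⟩
    refine ⟨fun f hf => ?_, fun σ f => ?_⟩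
    · simp [h1 f hf]
    · simp [h2 σ f]

/-! At a stalk everything is about the finite set `Z = g⁻¹(t)` and the group `M = F_t`.
The coboundary is the differential of the alternating coface complex of the cosimplicial group
`[n] ↦ M^(Z^(n+1))`, so it squares to zero. It preserves alternating cochains: sign-equivariance
of `δφ` is checked on adjacent transpositions, and on a tuple with a repeated entry only the two
terms deleting one of the repeated entries survive, and they cancel. Alternating cochains vanish
in degrees above `N`, where no tuple is injective. Exactness comes from the contracting homotopy
`φ ↦ φ (z, -)` for a point `z ∈ Z` (which exists since `g` is surjective); it preserves
alternating cochains. -/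

open CategoryTheory AlgebraicTopology Equiv Fin

lemma AddCommGrpCat.hom_sum_apply {A B : AddCommGrpCat} {ι : Type*} (s : Finset ι)
    (u : ι → (A ⟶ B)) (x : A) : (∑ i ∈ s, u i).hom x = ∑ i ∈ s, (u i).hom x :=
  (DFunLike.congr_fun (map_sum AddCommGrpCat.homAddEquiv u s) x).trans
    (AddMonoidHom.finsetSum_apply _ _ _)

lemma Fin.removeNth_castSucc_comp_swap_castSucc_succ {α : Type*} {n : ℕ} (i : Fin (n + 1))
    (f : Fin (n + 2) → α) :
    i.castSucc.removeNth (f ∘ swap i.castSucc i.succ) = i.succ.removeNth f := by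
  ext k
  simp only [removeNth, Function.comp_apply]
  congr 1
  simp only [succAbove, swap_apply_def, Fin.ext_iff, Fin.lt_def, val_castSucc, val_succ]
  split_ifs <;> simp_all <;> omega

variable {Z M : Type} [AddCommGroup M]

def IsSignEquivariant {m : ℕ} (φ : (Fin m → Z) → M) : Prop :=
  ∀ (σ : Perm (Fin m)) (f : Fin m → Z), φ (f ∘ σ) = ((Perm.sign σ : ℤˣ) : ℤ) • φ f

lemma mem_alternatingSubgroup {n : ℕ} {φ : (Fin (n + 1) → Z) → M} :
    φ ∈ alternatingSubgroup Z M n ↔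
      (∀ f, ¬Function.Injective f → φ f = 0) ∧ IsSignEquivariant φ :=
  Iff.rfl

lemma isSignEquivariant_of_comp_swap_castSucc_succ {n : ℕ} {φ : (Fin (n + 1) → Z) → M}
    (h : ∀ (i : Fin n) (f : Fin (n + 1) → Z), φ (f ∘ swap i.castSucc i.succ) = -φ f) :
    IsSignEquivariant φ := by
  intro σ
  have hσ : σ ∈ Submonoid.closure (Set.range fun i : Fin n ↦ swap i.castSucc i.succ) := by
    rw [Perm.mclosure_swap_castSucc_succ]
    trivial
  induction hσ using Submonoid.closure_induction with
  | mem _ hτ =>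
    obtain ⟨i, rfl⟩ := hτ
    intro f
    rw [h, Perm.sign_swap (castSucc_lt_succ (i := i)).ne]
    simp
  | one => simp
  | mul σ τ _ _ hσ hτ =>
    intro f
    rw [Perm.coe_mul, ← Function.comp_assoc, hτ, hσ, Perm.sign_mul, Units.val_mul, mul_comm,
      mul_smul]

namespace IsSignEquivariant

variable {n : ℕ} {φ : (Fin (n + 1) → Z) → M}

lemma apply_insertNth (hφ : IsSignEquivariant φ) (p : Fin (n + 1)) (z : Z) (v : Fin n → Z) :
    φ (p.insertNth z v) = (-1 : ℤ) ^ (p : ℕ) • φ (cons z v) := by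
  rw [← cons_comp_cycleRange, hφ, sign_cycleRange]
  simp

lemma neg_one_pow_smul_apply_insertNth (hφ : IsSignEquivariant φ) (p : Fin (n + 1)) (z : Z)
    (v : Fin n → Z) : (-1 : ℤ) ^ (p : ℕ) • φ (p.insertNth z v) = φ (cons z v) := by
  rw [hφ.apply_insertNth, smul_smul, ← pow_add, Even.neg_one_pow ⟨p, rfl⟩, one_smul]

/-- The two tuples differ by a permutation of sign `(-1) ^ (i + j + 1)`. -/
lemma neg_one_pow_smul_apply_removeNth_add_eq_zero (hφ : IsSignEquivariant φ)
    {f : Fin (n + 2) → Z} {i j : Fin (n + 2)} (hf : f i = f j) (hij : i ≠ j) :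
    (-1 : ℤ) ^ (i : ℕ) • φ (i.removeNth f) + (-1 : ℤ) ^ (j : ℕ) • φ (j.removeNth f) = 0 := by
  rcases exists_succAbove_eq hij with ⟨i, rfl⟩
  rw [← (i.predAbove j).insertNth_self_removeNth (removeNth _ _), ← removeNth_removeNth_eq_swap,
    removeNth, succAbove_succAbove_predAbove, hφ.apply_insertNth,
    ← hφ.neg_one_pow_smul_apply_insertNth, insertNth_removeNth,
    Function.update_eq_self_iff.2 hf.symm, smul_smul, ← pow_add,
    neg_one_pow_succAbove_add_predAbove, neg_smul, pow_add, mul_smul, smul_smul (_ ^ i.val), ← sq,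
    ← pow_mul, pow_mul', neg_one_pow_two, one_pow, one_smul, neg_add_cancel]

end IsSignEquivariant

lemma cosimplicialCoboundary_apply (n : ℕ) (φ : (Fin (n + 1) → Z) → M)
    (f : Fin (n + 2) → Z) :
    cosimplicialCoboundary Z M n φ f =
      ∑ i : Fin (n + 2), (-1 : ℤ) ^ (i : ℕ) • φ (i.removeNth f) :=
  rfl

def functionCosimplicialObject (Z M : Type) [AddCommGroup M] :
    CosimplicialObject AddCommGrpCat where
  obj n := AddCommGrpCat.of ((Fin (n.len + 1) → Z) → M)
  map α := AddCommGrpCat.ofHom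
    { toFun := fun φ f ↦ φ (f ∘ α.toOrderHom)
      map_zero' := rfl
      map_add' := fun _ _ ↦ rfl }

lemma cosimplicialCoboundary_apply_eq_objD (n : ℕ) (φ : (Fin (n + 1) → Z) → M) :
    cosimplicialCoboundary Z M n φ =
      (AlternatingCofaceMapComplex.objD (functionCosimplicialObject Z M) n).hom φ := by
  ext f
  calc cosimplicialCoboundary Z M n φ f
      = ∑ i : Fin (n + 2),
          (((-1 : ℤ) ^ (i : ℕ) • (functionCosimplicialObject Z M).δ i).hom φ) f := rfl
    _ = (∑ i : Fin (n + 2),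
          ((-1 : ℤ) ^ (i : ℕ) • (functionCosimplicialObject Z M).δ i).hom φ) f :=
      (Finset.sum_apply _ _ _).symm
    _ = _ := congrFun (AddCommGrpCat.hom_sum_apply _ _ _).symm f

lemma cosimplicialCoboundary_cosimplicialCoboundary (n : ℕ) (ψ : (Fin (n + 1) → Z) → M) :
    cosimplicialCoboundary Z M (n + 1) (cosimplicialCoboundary Z M n ψ) = 0 := by
  rw [cosimplicialCoboundary_apply_eq_objD, cosimplicialCoboundary_apply_eq_objD]
  exact congrArg (fun d ↦ AddCommGrpCat.Hom.hom d ψ)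
    (AlternatingCofaceMapComplex.d_squared (functionCosimplicialObject Z M) n)

lemma cosimplicialCoboundary_apply_eq_zero_of_not_injective {n : ℕ}
    {φ : (Fin (n + 1) → Z) → M} (hzero : ∀ f, ¬Function.Injective f → φ f = 0)
    (hφ : IsSignEquivariant φ) {f : Fin (n + 2) → Z} (hf : ¬Function.Injective f) :
    cosimplicialCoboundary Z M n φ f = 0 := by
  obtain ⟨i, j, hfij, hij⟩ := Function.not_injective_iff.mp hf
  rw [cosimplicialCoboundary_apply, Fintype.sum_eq_add i j hij fun k ⟨hki, hkj⟩ ↦ ?_]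
  · exact hφ.neg_one_pow_smul_apply_removeNth_add_eq_zero hfij hij
  · obtain ⟨i, rfl⟩ := exists_succAbove_eq hki.symm
    obtain ⟨j, rfl⟩ := exists_succAbove_eq hkj.symm
    rw [hzero _ fun hinj ↦ hij (congrArg k.succAbove (hinj hfij)), smul_zero]

lemma IsSignEquivariant.cosimplicialCoboundary_comp_swap_castSucc_succ {n : ℕ}
    {φ : (Fin (n + 1) → Z) → M} (hφ : IsSignEquivariant φ) (i : Fin (n + 1))
    (f : Fin (n + 2) → Z) :
    cosimplicialCoboundary Z M n φ (f ∘ swap i.castSucc i.succ) =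
      -cosimplicialCoboundary Z M n φ f := by
  set τ := swap i.castSucc i.succ
  have hterm (j : Fin (n + 2)) : (-1 : ℤ) ^ (j : ℕ) • φ (j.removeNth (f ∘ τ)) =
      -((-1 : ℤ) ^ (τ j : ℕ) • φ ((τ j).removeNth f)) := by
    by_cases hj₁ : j = i.castSucc
    · subst hj₁
      rw [swap_apply_left, removeNth_castSucc_comp_swap_castSucc_succ, val_castSucc, val_succ,
        pow_succ, mul_neg_one, neg_smul, neg_neg]
    by_cases hj₂ : j = i.succ
    · subst hj₂
      have hττ : (f ∘ τ) ∘ swap i.castSucc i.succ = f := by ext; simp [τ]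
      rw [swap_apply_right, ← removeNth_castSucc_comp_swap_castSucc_succ, hττ, val_castSucc,
        val_succ, pow_succ, mul_neg_one, neg_smul]
    obtain ⟨a, ha⟩ := exists_succAbove_eq (Ne.symm hj₁)
    obtain ⟨b, hb⟩ := exists_succAbove_eq (Ne.symm hj₂)
    have hab : a ≠ b := fun h ↦ (castSucc_lt_succ (i := i)).ne (by rw [← ha, ← hb, h])
    have hcomp : j.removeNth (f ∘ τ) = j.removeNth f ∘ swap a b := by
      ext k
      simp [τ, removeNth, ← ha, ← hb, succAbove_right_injective.swap_apply]
    rw [swap_apply_of_ne_of_ne hj₁ hj₂, hcomp, hφ, Perm.sign_swap hab]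
    simp
  rw [cosimplicialCoboundary_apply, cosimplicialCoboundary_apply,
    Finset.sum_congr rfl fun j _ ↦ hterm j, Finset.sum_neg_distrib,
    Equiv.sum_comp τ fun j ↦ (-1 : ℤ) ^ (j : ℕ) • φ (j.removeNth f)]

lemma cosimplicialCoboundary_mem_alternatingSubgroup {n : ℕ} {φ : (Fin (n + 1) → Z) → M}
    (hφ : φ ∈ alternatingSubgroup Z M n) :
    cosimplicialCoboundary Z M n φ ∈ alternatingSubgroup Z M (n + 1) := by
  obtain ⟨hzero, hsign⟩ := mem_alternatingSubgroup.mp hφ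
  exact ⟨fun _ hf ↦ cosimplicialCoboundary_apply_eq_zero_of_not_injective hzero hsign hf,
    isSignEquivariant_of_comp_swap_castSucc_succ
      hsign.cosimplicialCoboundary_comp_swap_castSucc_succ⟩

lemma alternatingSubgroup_eq_bot_of_card_le [Finite Z] {n : ℕ} (hn : Nat.card Z ≤ n) :
    alternatingSubgroup Z M n = ⊥ := by
  refine (AddSubgroup.eq_bot_iff_forall _).mpr fun φ hφ ↦ funext fun f ↦ hφ.1 f fun hf ↦ ?_
  have := Nat.card_le_card_of_injective f hf
  simp only [Nat.card_eq_fintype_card, Fintype.card_fin] at this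
  omega

lemma cosimplicialAugmentation_mem_alternatingSubgroup (c : M) :
    cosimplicialAugmentation Z M c ∈ alternatingSubgroup Z M 0 :=
  ⟨fun f hf ↦ absurd (fun a b _ ↦ Subsingleton.elim (α := Fin 1) a b) hf,
    fun σ f ↦ by simp [Subsingleton.elim (α := Perm (Fin 1)) σ 1, cosimplicialAugmentation]⟩

lemma cosimplicialAugmentation_injective [Nonempty Z] :
    Function.Injective (cosimplicialAugmentation Z M) :=
  fun _ _ h ↦ congrFun h fun _ ↦ Classical.arbitrary Z

lemma cosimplicialCoboundary_cosimplicialAugmentation (c : M) :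
    cosimplicialCoboundary Z M 0 (cosimplicialAugmentation Z M c) = 0 := by
  ext f
  simp [cosimplicialCoboundary_apply, cosimplicialAugmentation, Fin.sum_univ_two]

def consContraction (z : Z) (n : ℕ) : ((Fin (n + 1) → Z) → M) →+ ((Fin n → Z) → M) :=
  AddMonoidHom.mk' (fun φ f ↦ φ (cons z f)) fun _ _ ↦ rfl

lemma consContraction_mem_alternatingSubgroup (z : Z) {n : ℕ} {φ : (Fin (n + 2) → Z) → M}
    (hφ : φ ∈ alternatingSubgroup Z M (n + 1)) :
    consContraction z (n + 1) φ ∈ alternatingSubgroup Z M n := by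
  refine ⟨fun f hf ↦ hφ.1 _ fun hinj ↦ hf (cons_injective_iff.mp hinj).2, fun σ f ↦ ?_⟩
  have hcons :
      (cons z (f ∘ σ) : Fin (n + 2) → Z) = cons z f ∘ Perm.decomposeFin.symm (0, σ) := by
    ext k
    cases k using Fin.cases <;>
      simp [Perm.decomposeFin_symm_apply_zero, Perm.decomposeFin_symm_apply_succ]
  simp only [consContraction, AddMonoidHom.mk'_apply]
  rw [hcons, hφ.2, Perm.decomposeFin.symm_sign]
  simp

lemma cosimplicialCoboundary_consContraction_add (z : Z) {n : ℕ}
    (φ : (Fin (n + 2) → Z) → M) :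
    cosimplicialCoboundary Z M n (consContraction z (n + 1) φ) +
      consContraction z (n + 2) (cosimplicialCoboundary Z M (n + 1) φ) = φ := by
  ext f
  have hsucc (i : Fin (n + 2)) :
      i.succ.removeNth (cons z f : Fin (n + 3) → Z) = cons z (i.removeNth f) :=
    cons_comp_succ_succAbove z f i
  simp [cosimplicialCoboundary_apply, consContraction, Fin.sum_univ_succ (n := n + 2), pow_succ,
    hsucc]

lemma cosimplicialAugmentation_consContraction_add (z : Z) (φ : (Fin 1 → Z) → M) :
    cosimplicialAugmentation Z M (φ fun _ ↦ z) +
      consContraction z 1 (cosimplicialCoboundary Z M 0 φ) = φ := by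
  ext f
  have hlast : (1 : Fin 2).removeNth (cons z f : Fin 2 → Z) = fun _ ↦ z := by
    ext k
    fin_cases k
    rfl
  simp [cosimplicialCoboundary_apply, consContraction, cosimplicialAugmentation, Fin.sum_univ_two,
    hlast]

lemma cosimplicialCoboundary_zero_eq_zero_iff [Nonempty Z] (φ : (Fin 1 → Z) → M) :
    cosimplicialCoboundary Z M 0 φ = 0 ↔ ∃ c, φ = cosimplicialAugmentation Z M c := by
  refine ⟨fun hφ ↦ ?_, fun ⟨c, hc⟩ ↦ ?_⟩
  · have hcontract := cosimplicialAugmentation_consContraction_add (Classical.arbitrary Z) φ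
    rw [hφ, map_zero, add_zero] at hcontract
    exact ⟨_, hcontract.symm⟩
  · exact hc ▸ cosimplicialCoboundary_cosimplicialAugmentation c

lemma cosimplicialCoboundary_eq_zero_iff [Nonempty Z] {n : ℕ} {φ : (Fin (n + 2) → Z) → M}
    (hφ : φ ∈ alternatingSubgroup Z M (n + 1)) :
    cosimplicialCoboundary Z M (n + 1) φ = 0 ↔
      ∃ ψ ∈ alternatingSubgroup Z M n, cosimplicialCoboundary Z M n ψ = φ := by
  refine ⟨fun hδφ ↦ ?_, fun ⟨ψ, _, hψ⟩ ↦ ?_⟩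
  · have hcontract := cosimplicialCoboundary_consContraction_add (Classical.arbitrary Z) φ
    rw [hδφ, map_zero, add_zero] at hcontract
    exact ⟨_, consContraction_mem_alternatingSubgroup _ hφ, hcontract⟩
  · exact hψ ▸ cosimplicialCoboundary_cosimplicialCoboundary n ψ

theorem alternating_resolution_exact_general
    {T0 T : Type} [TopologicalSpace T]
    (g : T0 → T)
    (hsurj : Function.Surjective g) (N : ℕ)
    (hN : ∀ x : T, (g ⁻¹' {x}).Finite ∧ (g ⁻¹' {x}).ncard ≤ N)
    (F : AbEtaleSheaf T) (t : T) :
    -- `(F^{•,a})` is a subcomplex of `(F^•)`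
    (∀ (n : ℕ) (φ : (Fin (n + 1) → ↥(g ⁻¹' {t})) → F.Stalk t),
      φ ∈ alternatingSubgroup _ _ n →
        cosimplicialCoboundary _ _ n φ ∈ alternatingSubgroup _ _ (n + 1)) ∧
    -- it vanishes in degrees above `N`
    (∀ n : ℕ, N < n → alternatingSubgroup ↥(g ⁻¹' {t}) (F.Stalk t) n = ⊥) ∧
    -- the augmentation lands in `F^{0,a}_t` and is injective
    (∀ c : F.Stalk t, cosimplicialAugmentation ↥(g ⁻¹' {t}) _ c ∈
      alternatingSubgroup _ _ 0) ∧
    Function.Injective (cosimplicialAugmentation ↥(g ⁻¹' {t}) (F.Stalk t)) ∧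
    -- exactness at `F^{0,a}_t`
    (∀ φ ∈ alternatingSubgroup ↥(g ⁻¹' {t}) (F.Stalk t) 0,
      cosimplicialCoboundary _ _ 0 φ = 0 ↔
        ∃ c : F.Stalk t, φ = cosimplicialAugmentation _ _ c) ∧
    -- exactness at `F^{n+1,a}_t`
    (∀ (n : ℕ) (φ : (Fin (n + 2) → ↥(g ⁻¹' {t})) → F.Stalk t),
      φ ∈ alternatingSubgroup _ _ (n + 1) →
      (cosimplicialCoboundary _ _ (n + 1) φ = 0 ↔
        ∃ ψ ∈ alternatingSubgroup ↥(g ⁻¹' {t}) (F.Stalk t) n,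
          cosimplicialCoboundary _ _ n ψ = φ)) := by
  obtain ⟨x₀, hx₀⟩ := hsurj t
  have : Nonempty ↥(g ⁻¹' {t}) := ⟨⟨x₀, hx₀⟩⟩
  have : Finite ↥(g ⁻¹' {t}) := (hN t).1.to_subtype
  have hcard : Nat.card ↥(g ⁻¹' {t}) ≤ N := (Nat.card_coe_set_eq _).trans_le (hN t).2
  exact ⟨fun _ _ ↦ cosimplicialCoboundary_mem_alternatingSubgroup,
    fun _ hn ↦ alternatingSubgroup_eq_bot_of_card_le (hcard.trans hn.le),
    cosimplicialAugmentation_mem_alternatingSubgroup, cosimplicialAugmentation_injective,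
    fun φ _ ↦ cosimplicialCoboundary_zero_eq_zero_iff φ,
    fun _ _ hφ ↦ cosimplicialCoboundary_eq_zero_iff hφ⟩

/-- Let `g : T₀ → T` be a proper continuous surjection of locally
compact Hausdorff spaces which is at most `N`-to-one, `F` a sheaf of abelian groups on
`T`, and `F^{n,a}` the alternating subsheaves of `F^n = (g_n)_*(g_n^* F)` supported on
the free part.  Then `(F^{n,a})_n` is a subcomplex of `(F^n)_n` which vanishes in
degrees above `N`, and the augmented complex `0 → F → F^{0,a} → ⋯ → F^{N,a} → 0` is
exact.  Since exactness of a complex of sheaves means exactness at every stalk, and the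
stalk of `F^{n,a}` at `t` is the alternating subgroup
`F^{n,a}_t ⊆ C(Z_t^{n+1}, F_t)` with `Z_t = g⁻¹(t)`, this is formalized at each stalk,
which is the equivalent form stated in the claim. -/
theorem alternating_resolution_exact
    {T0 T : Type} [TopologicalSpace T0] [TopologicalSpace T]
    [T2Space T0] [LocallyCompactSpace T0] [T2Space T] [LocallyCompactSpace T]
    (g : T0 → T) (hc : Continuous g) (hp : IsProperMap g)
    (hsurj : Function.Surjective g) (N : ℕ)
    (hN : ∀ x : T, (g ⁻¹' {x}).Finite ∧ (g ⁻¹' {x}).ncard ≤ N)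
    (F : AbEtaleSheaf T) (t : T) :
    -- `(F^{•,a})` is a subcomplex of `(F^•)`
    (∀ (n : ℕ) (φ : (Fin (n + 1) → ↥(g ⁻¹' {t})) → F.Stalk t),
      φ ∈ alternatingSubgroup _ _ n →
        cosimplicialCoboundary _ _ n φ ∈ alternatingSubgroup _ _ (n + 1)) ∧
    -- it vanishes in degrees above `N`
    (∀ n : ℕ, N < n → alternatingSubgroup ↥(g ⁻¹' {t}) (F.Stalk t) n = ⊥) ∧
    -- the augmentation lands in `F^{0,a}_t` and is injective
    (∀ c : F.Stalk t, cosimplicialAugmentation ↥(g ⁻¹' {t}) _ c ∈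
      alternatingSubgroup _ _ 0) ∧
    Function.Injective (cosimplicialAugmentation ↥(g ⁻¹' {t}) (F.Stalk t)) ∧
    -- exactness at `F^{0,a}_t`
    (∀ φ ∈ alternatingSubgroup ↥(g ⁻¹' {t}) (F.Stalk t) 0,
      cosimplicialCoboundary _ _ 0 φ = 0 ↔
        ∃ c : F.Stalk t, φ = cosimplicialAugmentation _ _ c) ∧
    -- exactness at `F^{n+1,a}_t`
    (∀ (n : ℕ) (φ : (Fin (n + 2) → ↥(g ⁻¹' {t})) → F.Stalk t),
      φ ∈ alternatingSubgroup _ _ (n + 1) →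
      (cosimplicialCoboundary _ _ (n + 1) φ = 0 ↔
        ∃ ψ ∈ alternatingSubgroup ↥(g ⁻¹' {t}) (F.Stalk t) n,
          cosimplicialCoboundary _ _ n ψ = φ)) :=
  alternating_resolution_exact_general g hsurj N hN F t
end

section
/- Let (X,φ) be a non-wandering Smale space with an s/u-bijective pair (Y,ψ,f,Z,ζ,g), with fiber powers Z_M of Z over X and Σ_{L,M} = Y_L ×_X Z_M. Then for each M the natural map Σ_{0,M} → Z_M (projection forgetting the Y-coordinate) is an s-bijective factor map of Smale spaces, and Σ_{L,M} is canonically identified with the (L+1)-fold fiber product of Σ_{0,M} over Z_M. -/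
open Filter Topology

/-- A **Smale space** `(X, φ)`: a compact metric space `X` together with a
self-homeomorphism `φ` satisfying Ruelle's hyperbolicity axioms.  The bracket
`[x, y]` is encoded as a total function `bracket` which is only meaningful (and only
constrained by the axioms) when `dist x y < eps`; `bracket x y` is the unique point of
`X^s(x, eps) ∩ X^u(y, eps)`. -/
structure SmaleSpace (X : Type) [MetricSpace X] [CompactSpace X] where
  phi : X ≃ₜ X
  eps : ℝ
  lam : ℝ
  eps_pos : 0 < eps
  lam_pos : 0 < lam
  lam_lt_one : lam < 1
  bracket : X → X → X
  bracket_cont : ContinuousOn (fun p : X × X => bracket p.1 p.2) {p | dist p.1 p.2 < eps}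
  bracket_self : ∀ x, bracket x x = x
  bracket_assoc₁ : ∀ x y z, dist x y < eps → dist y z < eps → dist x z < eps →
    bracket x (bracket y z) = bracket x z
  bracket_assoc₂ : ∀ x y z, dist x y < eps → dist y z < eps → dist x z < eps →
    bracket (bracket x y) z = bracket x z
  bracket_phi : ∀ x y, dist x y < eps → dist (phi x) (phi y) < eps →
    bracket (phi x) (phi y) = phi (bracket x y)
  stable_contract : ∀ x y, dist x y < eps → bracket x y = y →
    dist (phi x) (phi y) ≤ lam * dist x y
  unstable_contract : ∀ x y, dist x y < eps → bracket x y = x →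
    dist (phi.symm x) (phi.symm y) ≤ lam * dist x y

namespace SmaleSpace

variable {X : Type} [MetricSpace X] [CompactSpace X]

/-- Stable equivalence: forward orbits converge together. -/
def stablyEquiv (S : SmaleSpace X) (x y : X) : Prop :=
  Tendsto (fun n : ℕ => dist ((⇑S.phi)^[n] x) ((⇑S.phi)^[n] y)) atTop (𝓝 0)

/-- Unstable equivalence: backward orbits converge together. -/
def unstablyEquiv (S : SmaleSpace X) (x y : X) : Prop :=
  Tendsto (fun n : ℕ => dist ((⇑S.phi.symm)^[n] x) ((⇑S.phi.symm)^[n] y)) atTop (𝓝 0)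

/-- The system is non-wandering: every point is non-wandering. -/
def NonWandering (S : SmaleSpace X) : Prop :=
  ∀ (x : X) (U : Set X), IsOpen U → x ∈ U →
    ∃ n : ℕ, 0 < n ∧ (U ∩ (⇑S.phi)^[n] ⁻¹' U).Nonempty

/-- The local stable set `X^s(x, δ)`. -/
def locStable (S : SmaleSpace X) (x : X) (δ : ℝ) : Set X :=
  {y | dist x y < δ ∧ S.bracket x y = y}

/-- The local unstable set `X^u(y, δ)`. -/
def locUnstable (S : SmaleSpace X) (y : X) (δ : ℝ) : Set X :=
  {x | dist x y < δ ∧ S.bracket x y = x}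

/-- `(X, φ)` has totally disconnected stable sets. -/
def TotallyDisconnectedStableSets (S : SmaleSpace X) : Prop :=
  ∀ x δ, IsTotallyDisconnected (S.locStable x δ)

/-- `(X, φ)` has totally disconnected unstable sets. -/
def TotallyDisconnectedUnstableSets (S : SmaleSpace X) : Prop :=
  ∀ x δ, IsTotallyDisconnected (S.locUnstable x δ)

end SmaleSpace

/-- A factor map between Smale spaces: a continuous equivariant surjection. -/
structure FactorMap {X Y : Type} [MetricSpace X] [CompactSpace X] [MetricSpace Y]
    [CompactSpace Y] (S : SmaleSpace X) (S' : SmaleSpace Y) where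
  toFun : X → Y
  continuous_toFun : Continuous toFun
  surjective : Function.Surjective toFun
  equivariant : ∀ x, toFun (S.phi x) = S'.phi (toFun x)

namespace FactorMap

variable {X Y : Type} [MetricSpace X] [CompactSpace X] [MetricSpace Y] [CompactSpace Y]
  {S : SmaleSpace X} {S' : SmaleSpace Y}

/-- A factor map is `s`-bijective if it restricts to a bijection on every stable
equivalence class. -/
def IsSBijective (f : FactorMap S S') : Prop :=
  ∀ x : X, Set.BijOn f.toFun {y | S.stablyEquiv x y} {y | S'.stablyEquiv (f.toFun x) y}

/-- A factor map is `u`-bijective if it restricts to a bijection on every unstable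
equivalence class. -/
def IsUBijective (f : FactorMap S S') : Prop :=
  ∀ x : X, Set.BijOn f.toFun {y | S.unstablyEquiv x y} {y | S'.unstablyEquiv (f.toFun x) y}

end FactorMap

/-- Interface (taken as given data, not constructed here): **Putnam's stable homology**
`H^s_•(X, φ)` of a (non-wandering) Smale space `(X, φ)`.  It is defined from an
`s/u`-bijective pair `(Y, ψ, f, Z, ζ, g)` over `(X, φ)` as the homology of the double
complex of Krieger's stable dimension groups `D^s(Σ_{L,M}, σ_{L,M})` of the shifts of
finite type `Σ_{L,M} = Y_L ×_X Z_M`. -/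
structure PutnamStableHomology {X : Type} [MetricSpace X] [CompactSpace X]
    (S : SmaleSpace X) : Type 1 where
  /-- The homology group `H^s_k(X, φ)`. -/
  H : ℤ → AddCommGrpCat.{0}

variable {X Y Z : Type} [MetricSpace X] [CompactSpace X] [MetricSpace Y] [CompactSpace Y]
  [MetricSpace Z] [CompactSpace Z]

/-- The componentwise dynamics on the fiber powers of a factor map. -/
def FactorMap.fibPowMap {S' : SmaleSpace Z} {S : SmaleSpace X} (g : FactorMap S' S)
    (M : ℕ) (z : FibPow g.toFun M) : FibPow g.toFun M :=
  ⟨fun i => S'.phi (z.1 i), by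
    intro i j
    rw [g.equivariant, g.equivariant, z.2 i j]⟩

/-- `Σ_{0,M} = Y ×_X Z_M`. -/
def Sigma0M {SY : SmaleSpace Y} {SZ : SmaleSpace Z} {S : SmaleSpace X}
    (f : FactorMap SY S) (g : FactorMap SZ S) (M : ℕ) : Type :=
  {p : Y × FibPow g.toFun M // f.toFun p.1 = FibPow.proj g.toFun M p.2}

instance {SY : SmaleSpace Y} {SZ : SmaleSpace Z} {S : SmaleSpace X}
    (f : FactorMap SY S) (g : FactorMap SZ S) (M : ℕ) :
    TopologicalSpace (Sigma0M f g M) :=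
  instTopologicalSpaceSubtype

/-- `Σ_{L,M} = Y_L ×_X Z_M`. -/
def SigmaLM {SY : SmaleSpace Y} {SZ : SmaleSpace Z} {S : SmaleSpace X}
    (f : FactorMap SY S) (g : FactorMap SZ S) (L M : ℕ) : Type :=
  {p : FibPow f.toFun L × FibPow g.toFun M //
    FibPow.proj f.toFun L p.1 = FibPow.proj g.toFun M p.2}

instance {SY : SmaleSpace Y} {SZ : SmaleSpace Z} {S : SmaleSpace X}
    (f : FactorMap SY S) (g : FactorMap SZ S) (L M : ℕ) :
    TopologicalSpace (SigmaLM f g L M) :=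
  instTopologicalSpaceSubtype

variable {SY : SmaleSpace Y} {SZ : SmaleSpace Z} {S : SmaleSpace X}

/-- The dynamics `σ_{0,M}` on `Σ_{0,M}`. -/
def sigma0MMap (f : FactorMap SY S) (g : FactorMap SZ S) (M : ℕ)
    (p : Sigma0M f g M) : Sigma0M f g M :=
  ⟨(SY.phi p.1.1, g.fibPowMap M p.1.2), by
    show f.toFun (SY.phi p.1.1) = g.toFun (SZ.phi (p.1.2.1 0))
    rw [f.equivariant, g.equivariant]
    exact congrArg _ p.2⟩

/-- The dynamics `σ_{L,M}` on `Σ_{L,M}`. -/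
def sigmaLMMap (f : FactorMap SY S) (g : FactorMap SZ S) (L M : ℕ)
    (p : SigmaLM f g L M) : SigmaLM f g L M :=
  ⟨(f.fibPowMap L p.1.1, g.fibPowMap M p.1.2), by
    show f.toFun (SY.phi (p.1.1.1 0)) = g.toFun (SZ.phi (p.1.2.1 0))
    rw [f.equivariant, g.equivariant]
    exact congrArg _ p.2⟩

/-- The natural projection `Σ_{0,M} → Z_M` forgetting the `Y`-coordinate. -/
def sigmaProj (f : FactorMap SY S) (g : FactorMap SZ S) (M : ℕ)
    (p : Sigma0M f g M) : FibPow g.toFun M :=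
  p.1.2

/-- Stable equivalence on `Σ_{0,M}` (componentwise, for the product dynamics). -/
def sigma0MStablyEquiv (f : FactorMap SY S) (g : FactorMap SZ S) (M : ℕ)
    (p q : Sigma0M f g M) : Prop :=
  SY.stablyEquiv p.1.1 q.1.1 ∧ ∀ i, SZ.stablyEquiv (p.1.2.1 i) (q.1.2.1 i)

/-- Stable equivalence on `Z_M` (componentwise, for the dynamics `ζ_M`). -/
def fibPowStablyEquiv (g : FactorMap SZ S) (M : ℕ) (z w : FibPow g.toFun M) : Prop :=
  ∀ i, SZ.stablyEquiv (z.1 i) (w.1 i)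

/-- The canonical comparison map `Σ_{L,M} → Σ_{0,M} ×_{Z_M} ⋯ ×_{Z_M} Σ_{0,M}`
(`(L+1)` factors), `(y_0, …, y_L, z) ↦ ((y_0, z), …, (y_L, z))`. -/
def sigmaCompare (f : FactorMap SY S) (g : FactorMap SZ S) (L M : ℕ)
    (p : SigmaLM f g L M) : FibPow (sigmaProj f g M) L :=
  ⟨fun i => ⟨(p.1.1.1 i, p.1.2), (p.1.1.2 i 0).trans p.2⟩, fun _ _ => rfl⟩

/-- The componentwise dynamics on `Σ_{0,M} ×_{Z_M} ⋯ ×_{Z_M} Σ_{0,M}`. -/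
def sigmaFibDyn (f : FactorMap SY S) (g : FactorMap SZ S) (L M : ℕ)
    (v : FibPow (sigmaProj f g M) L) : FibPow (sigmaProj f g M) L :=
  ⟨fun i => sigma0MMap f g M (v.1 i), by
    intro i j
    show g.fibPowMap M (sigmaProj f g M (v.1 i)) = g.fibPowMap M (sigmaProj f g M (v.1 j))
    rw [v.2 i j]⟩


/-! A point of `Σ_{0,M}` is a pair `(y, z)` with `f y = g z₀`, so the fibre of
`Σ_{0,M} → Z_M` over `z` is `f⁻¹(g z₀)`. Since `g` maps stably equivalent points to stably
equivalent points, moving `z` inside its stable class moves `g z₀` inside its stable class,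
and the `s`-bijectivity of `f` lifts this move uniquely to `Y`. The identification of
`Σ_{L,M}` with the fiber power of `Σ_{0,M}` over `Z_M` only reshuffles coordinates. -/

theorem FactorMap.iterate_equivariant {S' : SmaleSpace Z} (g : FactorMap S' S) (n : ℕ)
    (z : Z) : g.toFun ((⇑S'.phi)^[n] z) = (⇑S.phi)^[n] (g.toFun z) :=
  Function.Semiconj.iterate_right g.equivariant n z

theorem FactorMap.stablyEquiv_map {S' : SmaleSpace Z} (g : FactorMap S' S) {z w : Z}
    (h : S'.stablyEquiv z w) : S.stablyEquiv (g.toFun z) (g.toFun w) := by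
  have hg : UniformContinuous g.toFun :=
    CompactSpace.uniformContinuous_of_continuous g.continuous_toFun
  unfold SmaleSpace.stablyEquiv at h ⊢
  simp_rw [← g.iterate_equivariant]
  have h' : Tendsto (fun n => ((⇑S'.phi)^[n] z, (⇑S'.phi)^[n] w)) atTop (uniformity Z) :=
    tendsto_uniformity_iff_dist_tendsto_zero.2 h
  exact tendsto_uniformity_iff_dist_tendsto_zero.1 (Tendsto.comp hg h')

section SigmaLM

variable (f : FactorMap SY S) (g : FactorMap SZ S) (L M : ℕ)

theorem continuous_sigmaProj : Continuous (sigmaProj f g M) :=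
  continuous_snd.comp continuous_subtype_val

theorem sigmaProj_surjective : Function.Surjective (sigmaProj f g M) := fun z =>
  have ⟨y, hy⟩ := f.surjective (g.toFun (z.1 0))
  ⟨⟨(y, z), hy⟩, rfl⟩

theorem sigmaProj_sigma0MMap (p : Sigma0M f g M) :
    sigmaProj f g M (sigma0MMap f g M p) = g.fibPowMap M (sigmaProj f g M p) :=
  rfl

variable {f} in
theorem bijOn_sigmaProj_stablyEquiv (hf : f.IsSBijective) (p : Sigma0M f g M) :
    Set.BijOn (sigmaProj f g M) {q | sigma0MStablyEquiv f g M p q}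
      {w | fibPowStablyEquiv g M (sigmaProj f g M p) w} := by
  refine ⟨fun q hq => hq.2, fun q hq q' hq' hqq' => ?_, fun w hw => ?_⟩
  · have hz : q.1.2 = q'.1.2 := hqq'
    have hy : q.1.1 = q'.1.1 := (hf p.1.1).injOn hq.1 hq'.1 (by rw [q.2, q'.2, hz])
    exact Subtype.ext (Prod.ext hy hz)
  · have hfw : S.stablyEquiv (f.toFun p.1.1) (g.toFun (w.1 0)) := by
      rw [p.2]
      exact g.stablyEquiv_map (hw 0)
    obtain ⟨y, hy, hfy⟩ := (hf p.1.1).surjOn hfw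
    exact ⟨⟨(y, w), hfy⟩, ⟨hy, hw⟩, rfl⟩

-- All factors share their `Z_M`-coordinate; it is read off factor `0`.
def sigmaCompareInv (v : FibPow (sigmaProj f g M) L) : SigmaLM f g L M :=
  ⟨(⟨fun i => (v.1 i).1.1, fun i j => by
      rw [(v.1 i).2, (v.1 j).2]
      exact congrArg (fun z : FibPow g.toFun M => g.toFun (z.1 0)) (v.2 i j)⟩,
    (v.1 0).1.2), (v.1 0).2⟩

theorem continuous_sigmaCompare : Continuous (sigmaCompare f g L M) := by
  refine .subtype_mk (continuous_pi fun i => .subtype_mk (.prodMk ?_ ?_) _) _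
  · exact (continuous_apply i).comp
      (continuous_subtype_val.comp (continuous_fst.comp continuous_subtype_val))
  · exact continuous_snd.comp continuous_subtype_val

theorem continuous_sigmaCompareInv : Continuous (sigmaCompareInv f g L M) := by
  refine .subtype_mk (.prodMk (.subtype_mk (continuous_pi fun i => ?_) _) ?_) _
  · exact continuous_fst.comp
      (continuous_subtype_val.comp ((continuous_apply i).comp continuous_subtype_val))
  · exact continuous_snd.comp
      (continuous_subtype_val.comp ((continuous_apply 0).comp continuous_subtype_val))

def sigmaCompareHomeomorph : SigmaLM f g L M ≃ₜ FibPow (sigmaProj f g M) L where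
  toFun := sigmaCompare f g L M
  invFun := sigmaCompareInv f g L M
  left_inv _ := rfl
  right_inv v := Subtype.ext <| funext fun i => Subtype.ext <| Prod.ext rfl (v.2 0 i)
  continuous_toFun := continuous_sigmaCompare f g L M
  continuous_invFun := continuous_sigmaCompareInv f g L M

theorem isHomeomorph_sigmaCompare : IsHomeomorph (sigmaCompare f g L M) :=
  (sigmaCompareHomeomorph f g L M).isHomeomorph

theorem sigmaCompare_sigmaLMMap (p : SigmaLM f g L M) :
    sigmaCompare f g L M (sigmaLMMap f g L M p) =
      sigmaFibDyn f g L M (sigmaCompare f g L M p) :=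
  rfl

end SigmaLM

theorem sigma0M_s_bijective_and_sigmaLM_fiber_product_general
    (S : SmaleSpace X)
    (SY : SmaleSpace Y) (SZ : SmaleSpace Z)
    (f : FactorMap SY S) (hf : f.IsSBijective)
    (g : FactorMap SZ S)
    (L M : ℕ) :
    -- `Σ_{0,M} → Z_M` is a factor map ...
    (Continuous (sigmaProj f g M) ∧ Function.Surjective (sigmaProj f g M) ∧
      ∀ p, sigmaProj f g M (sigma0MMap f g M p) = g.fibPowMap M (sigmaProj f g M p)) ∧
    -- ... which is `s`-bijective
    (∀ p : Sigma0M f g M,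
      Set.BijOn (sigmaProj f g M) {q | sigma0MStablyEquiv f g M p q}
        {w | fibPowStablyEquiv g M (sigmaProj f g M p) w}) ∧
    -- and `Σ_{L,M}` is the `(L+1)`-fold fiber product of `Σ_{0,M}` over `Z_M`
    (IsHomeomorph (sigmaCompare f g L M) ∧
      ∀ p, sigmaCompare f g L M (sigmaLMMap f g L M p) =
        sigmaFibDyn f g L M (sigmaCompare f g L M p)) :=
  ⟨⟨continuous_sigmaProj f g M, sigmaProj_surjective f g M, sigmaProj_sigma0MMap f g M⟩,
    bijOn_sigmaProj_stablyEquiv g M hf,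
    isHomeomorph_sigmaCompare f g L M, sigmaCompare_sigmaLMMap f g L M⟩

/-- Let `(X, φ)` be a non-wandering Smale space with an
`s/u`-bijective pair `(Y, ψ, f, Z, ζ, g)`, with fiber powers `Z_M` of `Z` over `X` and
`Σ_{L,M} = Y_L ×_X Z_M`.  Then for each `M` the natural map `Σ_{0,M} → Z_M` (projection
forgetting the `Y`-coordinate) is an `s`-bijective factor map of Smale spaces, and
`Σ_{L,M}` is canonically identified (equivariantly homeomorphically) with the
`(L+1)`-fold fiber product of `Σ_{0,M}` over `Z_M`. -/
theorem sigma0M_s_bijective_and_sigmaLM_fiber_product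
    (S : SmaleSpace X) (hnw : S.NonWandering)
    (SY : SmaleSpace Y) (SZ : SmaleSpace Z)
    (f : FactorMap SY S) (hf : f.IsSBijective)
    (hYu : SY.TotallyDisconnectedUnstableSets)
    (g : FactorMap SZ S) (hg : g.IsUBijective)
    (hZs : SZ.TotallyDisconnectedStableSets)
    (L M : ℕ) :
    -- `Σ_{0,M} → Z_M` is a factor map ...
    (Continuous (sigmaProj f g M) ∧ Function.Surjective (sigmaProj f g M) ∧
      ∀ p, sigmaProj f g M (sigma0MMap f g M p) = g.fibPowMap M (sigmaProj f g M p)) ∧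
    -- ... which is `s`-bijective
    (∀ p : Sigma0M f g M,
      Set.BijOn (sigmaProj f g M) {q | sigma0MStablyEquiv f g M p q}
        {w | fibPowStablyEquiv g M (sigmaProj f g M p) w}) ∧
    -- and `Σ_{L,M}` is the `(L+1)`-fold fiber product of `Σ_{0,M}` over `Z_M`
    (IsHomeomorph (sigmaCompare f g L M) ∧
      ∀ p, sigmaCompare f g L M (sigmaLMMap f g L M p) =
        sigmaFibDyn f g L M (sigmaCompare f g L M p)) :=
  sigma0M_s_bijective_and_sigmaLM_fiber_product_general S SY SZ f hf g L M
end
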